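/- arXiv:1803.04672 — 2 statements merged into one kernel-verified Lean document; each statement's English description precedes it below -/
import Mathlib

section
/- Let X be a completely regular Hausdorff (Tychonoff) space and let H be a non-vanishing closed ideal of C_B(X). Then the following are equivalent: (1) sp(H) is pseudocompact; (2) H has no subideal of the form ⨁_{i∈I} H_i (an internal direct sum) where {H_i : i ∈ I} is an infinite faithfully indexed collection of closed subideals of H such that for every maximal closed subideal M of H there exists f ∈ H \ M with ⟨f⟩ ∩ H_i = 0 for all but at most one i ∈ I. -/
open BoundedContinuousFunction Set Filter Topology

section Preamble

variable {X : Type*} [TopologicalSpace X] {𝕜 : Type*} [RCLike 𝕜]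

theorem betaExt_aux (f : X →ᵇ 𝕜) :
    Continuous (fun x => (⟨f x, by
      simpa [Metric.mem_closedBall, dist_zero_right] using f.norm_coe_le_norm x⟩ :
        Metric.closedBall (0 : 𝕜) ‖f‖)) :=
  f.continuous.subtype_mk _

/-- `f_β`, the unique continuous extension of a bounded continuous function `f : X → 𝕜` to the
Stone–Čech compactification `βX`. -/
noncomputable def betaExt (f : X →ᵇ 𝕜) : StoneCech X → 𝕜 :=
  haveI : CompactSpace (Metric.closedBall (0 : 𝕜) ‖f‖) :=
    isCompact_iff_compactSpace.mp (isCompact_closedBall 0 ‖f‖)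
  fun p => (stoneCechExtend (betaExt_aux f) p).1

theorem betaExt_unit (f : X →ᵇ 𝕜) (x : X) : betaExt f (stoneCechUnit x) = f x := by
  haveI : CompactSpace (Metric.closedBall (0 : 𝕜) ‖f‖) :=
    isCompact_iff_compactSpace.mp (isCompact_closedBall 0 ‖f‖)
  exact congrArg Subtype.val (congrFun (stoneCechExtend_extends (betaExt_aux f)) x)

theorem continuous_betaExt (f : X →ᵇ 𝕜) : Continuous (betaExt f) := by
  haveI : CompactSpace (Metric.closedBall (0 : 𝕜) ‖f‖) :=
    isCompact_iff_compactSpace.mp (isCompact_closedBall 0 ‖f‖)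
  exact continuous_subtype_val.comp (continuous_stoneCechExtend _)

/-- `λ_G X`, the union over `g ∈ G` of the cozero-sets in `βX` of the extensions `g_β`. -/
def lambdaSet (G : Ideal (X →ᵇ 𝕜)) : Set (StoneCech X) :=
  ⋃ g ∈ G, {p | betaExt g p ≠ 0}

end Preamble

/-- A space is pseudocompact if every continuous real-valued function on it is bounded. -/
def Pseudocompact (Y : Type*) [TopologicalSpace Y] : Prop :=
  ∀ f : C(Y, ℝ), ∃ M : ℝ, ∀ y : Y, |f y| ≤ M

universe u

/-! `f ↦ f_β` is an isometric ring isomorphism `C_B(X) ≅ C(βX)`, and closed ideals of `C(βX)`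
correspond to open subsets of `βX` via `I ↦ setOfIdeal I`; `sp(H)` is the open set of `H`. Under
this correspondence the `H_i` of a direct sum as in the statement become pairwise disjoint open
sets, and the condition on maximal closed subideals says they form a discrete family in `sp(H)`:
the maximal closed subideals of `H` include the ideals `M_p` of functions in `H` vanishing at
`p ∈ sp(H)`, every proper closed subideal lies in some `M_p`, and `⟨f⟩ ∩ H_i = 0` says that the
neighbourhood `{f ≠ 0}` of `p` misses the `i`-th open set.

A completely regular space is pseudocompact iff it carries no infinite discrete family of nonempty
open sets: for an unbounded `g`, take preimages under `|g|` of small balls around values of `|g|`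
that are at least `2` apart; conversely `∑ n • φₙ`, with `φₙ` a bump function in the `n`-th open
set, is continuous and unbounded. -/

namespace Ideal

variable {R S : Type*} [Semiring R] [Semiring S] [TopologicalSpace R] [TopologicalSpace S]

def IsMaximalClosedSubideal (M H : Ideal R) : Prop :=
  IsClosed (M : Set R) ∧ M ≤ H ∧ M ≠ H ∧
    ∀ N : Ideal R, IsClosed (N : Set R) → N ≤ H → N ≠ H → M ≤ N → N = M

def HasDiscreteDirectSum (H : Ideal R) : Prop :=
  ∃ (I : Type u) (Hi : I → Ideal R),
    Infinite I ∧ Function.Injective Hi ∧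
    (∀ i, IsClosed (Hi i : Set R)) ∧ (∀ i, Hi i ≤ H) ∧
    (∀ i₀ : I, Hi i₀ ⊓ (⨆ i ∈ {i : I | i ≠ i₀}, Hi i) = ⊥) ∧
    ∀ M : Ideal R, M.IsMaximalClosedSubideal H →
      ∃ f ∈ H, f ∉ M ∧ {i : I | Ideal.span {f} ⊓ Hi i ≠ ⊥}.Subsingleton

section Comap

variable (e : R ≃+* S) (he : Continuous e) (he' : Continuous e.symm)
include he he'

theorem isClosed_comap_iff {J : Ideal S} : IsClosed (J.comap e : Set R) ↔ IsClosed (J : Set S) :=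
  (Homeomorph.mk e.toEquiv he he').isClosed_preimage

theorem isMaximalClosedSubideal_comap_iff {M H : Ideal S} :
    (M.comap e).IsMaximalClosedSubideal (H.comap e) ↔ M.IsMaximalClosedSubideal H := by
  obtain ⟨Φ, hΦ⟩ : ∃ Φ : Ideal S ≃o Ideal R, ∀ J, Φ J = J.comap e :=
    ⟨_, e.idealComapOrderIso_apply⟩
  simp only [IsMaximalClosedSubideal, ← hΦ, Φ.surjective.forall, Φ.le_iff_le, Φ.injective.ne_iff,
    Φ.injective.eq_iff]
  simp only [hΦ, isClosed_comap_iff e he he']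

theorem HasDiscreteDirectSum.comap {H : Ideal S} (h : H.HasDiscreteDirectSum.{u}) :
    (H.comap e).HasDiscreteDirectSum.{u} := by
  obtain ⟨I, Hi, hI, hinj, hcl, hle, hdir, hmax⟩ := h
  set Φ := e.idealComapOrderIso
  have hΦ (J : Ideal S) : J.comap e = Φ J := rfl
  refine ⟨I, fun i => Φ (Hi i), hI, Φ.injective.comp hinj,
    fun i => (isClosed_comap_iff e he he').2 (hcl i), fun i => Φ.monotone (hle i), fun i₀ => ?_,
    fun M hM => ?_⟩
  · simp only [← OrderIso.map_iSup₂, ← Φ.map_inf, hdir, Φ.map_bot]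
  obtain ⟨M, rfl⟩ := Φ.surjective M
  obtain ⟨f, hfH, hfM, hsub⟩ := hmax M ((isMaximalClosedSubideal_comap_iff e he he').1 hM)
  have hspan : Ideal.span {e.symm f} = Φ (Ideal.span {f}) := by
    rw [← hΦ, ← map_symm, map_span, Set.image_singleton]
  refine ⟨e.symm f, show e (e.symm f) ∈ H by rwa [e.apply_symm_apply],
    show e (e.symm f) ∉ M by rwa [e.apply_symm_apply], ?_⟩
  simpa only [hspan, ← Φ.map_inf, ← Φ.map_bot, Φ.injective.ne_iff] using hsub

theorem hasDiscreteDirectSum_comap_iff {H : Ideal S} :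
    (H.comap e).HasDiscreteDirectSum.{u} ↔ H.HasDiscreteDirectSum.{u} := by
  refine ⟨fun h => ?_, HasDiscreteDirectSum.comap e he he'⟩
  have := h.comap e.symm he' he
  rwa [comap_symm, map_comap_of_surjective _ e.surjective] at this

end Comap

end Ideal

section DiscreteFamily

variable {ι Y : Type*} [TopologicalSpace Y]

def IsDiscreteFamily (U : ι → Set Y) : Prop :=
  ∀ y, ∃ W ∈ 𝓝 y, {i | (U i ∩ W).Nonempty}.Subsingleton

namespace IsDiscreteFamily

variable {U : ι → Set Y} (hU : IsDiscreteFamily U)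
include hU

theorem locallyFinite : LocallyFinite U := fun y =>
  let ⟨W, hW, hsub⟩ := hU y
  ⟨W, hW, hsub.finite⟩

theorem disjoint {i j : ι} (hij : i ≠ j) : Disjoint (U i) (U j) := by
  refine Set.disjoint_left.2 fun y hyi hyj => hij ?_
  obtain ⟨W, hW, hsub⟩ := hU y
  exact hsub ⟨y, hyi, mem_of_mem_nhds hW⟩ ⟨y, hyj, mem_of_mem_nhds hW⟩

theorem injective (hne : ∀ i, (U i).Nonempty) : Function.Injective U := fun i j hij => by
  by_contra h
  exact (hne i).ne_empty ((hU.disjoint h).eq_bot_of_le (le_of_eq hij))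

end IsDiscreteFamily

end DiscreteFamily

theorem exists_seq_add_le_of_forall_exists_lt {Y : Type*} {h : Y → ℝ} (hh : ∀ M, ∃ y, M < h y)
    (c : ℝ) :
    ∃ y : ℕ → Y, ∀ m n, m < n → h (y m) + c ≤ h (y n) := by
  obtain ⟨y, -, hy⟩ := exists_seq_of_forall_finset_exists (fun _ => True)
    (fun a b => h a + c ≤ h b) fun s _ => by
      obtain ⟨M, hM⟩ := (s.finite_toSet.image h).bddAbove
      obtain ⟨y, hy⟩ := hh (M + c)
      exact ⟨y, trivial, fun x hx => by linarith [hM (Set.mem_image_of_mem h hx)]⟩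
  exact ⟨y, hy⟩

section Pseudocompact

variable {Y : Type*} [TopologicalSpace Y]

theorem exists_isDiscreteFamily_of_not_pseudocompact (h : ¬ Pseudocompact Y) :
    ∃ U : ℕ → Set Y, (∀ n, IsOpen (U n)) ∧ (∀ n, (U n).Nonempty) ∧ IsDiscreteFamily U := by
  simp only [Pseudocompact, not_forall, not_exists, not_le] at h
  obtain ⟨g, hg⟩ := h
  obtain ⟨y, hy⟩ := exists_seq_add_le_of_forall_exists_lt (h := fun z => |g z|) hg 2
  have hg' : Continuous fun z => |g z| := g.continuous.abs
  have hsep : Pairwise fun m n => 2 ≤ dist |g (y m)| |g (y n)| := fun m n hmn => by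
    change 2 ≤ dist _ _
    rw [Real.dist_eq]
    rcases hmn.lt_or_gt with hlt | hlt
    · linarith [hy m n hlt, neg_abs_le (|g (y m)| - |g (y n)|)]
    · linarith [hy n m hlt, le_abs_self (|g (y m)| - |g (y n)|)]
  refine ⟨fun n => (fun z => |g z|) ⁻¹' Metric.ball |g (y n)| (1 / 2),
    fun n => Metric.isOpen_ball.preimage hg', fun n => ⟨y n, by simp⟩, fun p => ?_⟩
  refine ⟨(fun z => |g z|) ⁻¹' Metric.ball |g p| (1 / 2),
    (Metric.isOpen_ball.preimage hg').mem_nhds (by simp), ?_⟩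
  rintro m ⟨z, hzm, hzp⟩ n ⟨z', hz'n, hz'p⟩
  by_contra hmn
  simp only [Set.mem_preimage, Metric.mem_ball] at hzp hzm hz'p hz'n
  linarith [hsep hmn, dist_triangle4 |g (y m)| |g z| |g p| |g z'|,
    dist_triangle |g (y m)| |g z'| |g (y n)|, dist_comm |g z| |g (y m)|, dist_comm |g z'| |g p|]

theorem CompletelyRegularSpace.exists_continuousMap_eq_one_support_subset
    [CompletelyRegularSpace Y] {U : Set Y} (hU : IsOpen U) {y : Y} (hy : y ∈ U) :
    ∃ φ : C(Y, ℝ), φ y = 1 ∧ Function.support φ ⊆ U := by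
  obtain ⟨f, hf, hfy, hfU⟩ := CompletelyRegularSpace.completely_regular_isOpen y U hU hy
  refine ⟨⟨fun z => 1 - f z, continuous_const.sub (continuous_subtype_val.comp hf)⟩,
    by simp [hfy], fun z hz => by_contra fun hzU => hz ?_⟩
  simp [hfU hzU]

theorem not_pseudocompact_of_isDiscreteFamily [CompletelyRegularSpace Y] {U : ℕ → Set Y}
    (hU : ∀ n, IsOpen (U n)) (hne : ∀ n, (U n).Nonempty) (hdisc : IsDiscreteFamily U) :
    ¬ Pseudocompact Y := by
  choose y hy using hne
  choose φ hφy hφU using fun n =>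
    CompletelyRegularSpace.exists_continuousMap_eq_one_support_subset (hU n) (hy n)
  have hφ_eq_zero {m n : ℕ} (hmn : m ≠ n) : φ n (y m) = 0 :=
    Function.notMem_support.1 fun h => (hdisc.disjoint hmn).notMem_of_mem_left (hy m) (hφU n h)
  let g : C(Y, ℝ) := ⟨fun z => ∑ᶠ n : ℕ, (n : ℝ) * φ n z, continuous_finsum
    (fun n => continuous_const.mul (φ n).continuous)
    (hdisc.locallyFinite.subset fun n => (Function.support_mul_subset_right _ _).trans (hφU n))⟩
  have hg (m : ℕ) : g (y m) = m := by
    change ∑ᶠ n : ℕ, (n : ℝ) * φ n (y m) = m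
    rw [finsum_eq_single _ m fun n hnm => by rw [hφ_eq_zero hnm.symm, mul_zero], hφy, mul_one]
  rintro hpc
  obtain ⟨M, hM⟩ := hpc g
  obtain ⟨m, hm⟩ := exists_nat_gt M
  have := hM (y m)
  rw [hg, Nat.abs_cast] at this
  linarith

theorem pseudocompact_iff_not_exists_isDiscreteFamily [CompletelyRegularSpace Y] :
    Pseudocompact Y ↔
      ¬ ∃ U : ℕ → Set Y, (∀ n, IsOpen (U n)) ∧ (∀ n, (U n).Nonempty) ∧ IsDiscreteFamily U :=
  ⟨fun h ⟨_, hU, hne, hdisc⟩ => not_pseudocompact_of_isDiscreteFamily hU hne hdisc h,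
    fun h => by_contra fun hpc => h (exists_isDiscreteFamily_of_not_pseudocompact hpc)⟩

end Pseudocompact

namespace ContinuousMap

section Semiring

variable {Q R : Type*} [TopologicalSpace Q] [CommSemiring R] [TopologicalSpace R]
  [IsTopologicalSemiring R]

theorem span_singleton_inf_eq_bot_iff [NoZeroDivisors R] (f : C(Q, R)) (J : Ideal C(Q, R)) :
    Ideal.span {f} ⊓ J = ⊥ ↔ Disjoint (Function.support f) (setOfIdeal J) := by
  refine ⟨fun h => Set.disjoint_left.2 fun x hfx hxJ => ?_, fun h => eq_bot_iff.2 ?_⟩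
  · obtain ⟨g, hg, hgx⟩ := mem_setOfIdeal.1 hxJ
    have hgf : g * f ∈ Ideal.span {f} ⊓ J :=
      ⟨Ideal.mem_span_singleton'.2 ⟨g, rfl⟩, J.mul_mem_right f hg⟩
    rw [h, Ideal.mem_bot] at hgf
    exact mul_ne_zero hgx hfx (DFunLike.congr_fun hgf x)
  · rintro _ ⟨hspan, hJ⟩
    obtain ⟨a, rfl⟩ := Ideal.mem_span_singleton'.1 hspan
    ext x
    by_contra hx
    exact Set.disjoint_left.1 h (right_ne_zero_of_mul hx) (mem_setOfIdeal.2 ⟨_, hJ, hx⟩)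

theorem idealOfSet_inf_iSup_eq_bot {ι : Type*} {U : ι → Set Q}
    (hU : Pairwise fun i j => Disjoint (U i) (U j)) (i₀ : ι) :
    idealOfSet R (U i₀) ⊓ ⨆ i ∈ {i | i ≠ i₀}, idealOfSet R (U i) = ⊥ := by
  have hle : ⨆ i ∈ {i | i ≠ i₀}, idealOfSet R (U i) ≤ idealOfSet R (U i₀)ᶜ :=
    iSup₂_le fun i hi => (ideal_gc Q R).monotone_u (hU hi).subset_compl_right
  refine eq_bot_iff.2 fun f ⟨hf₀, hf⟩ => ?_
  ext x
  by_cases hx : x ∈ U i₀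
  · exact mem_idealOfSet.1 (hle hf) (not_not.2 hx)
  · exact mem_idealOfSet.1 hf₀ hx

end Semiring

variable {Q 𝕜 : Type*} [TopologicalSpace Q] [CompactSpace Q] [T2Space Q] [RCLike 𝕜]
  {H : Ideal C(Q, 𝕜)}

theorem setOfIdeal_subset_iff_le (hH : IsClosed (H : Set C(Q, 𝕜))) {I : Ideal C(Q, 𝕜)} :
    setOfIdeal I ⊆ setOfIdeal H ↔ I ≤ H := by
  conv_rhs => rw [← idealOfSet_ofIdeal_isClosed hH]
  exact ideal_gc Q 𝕜 I _

theorem idealOfSet_le_of_subset (hH : IsClosed (H : Set C(Q, 𝕜))) {s : Set Q}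
    (hs : s ⊆ setOfIdeal H) : idealOfSet 𝕜 s ≤ H :=
  idealOfSet_ofIdeal_isClosed hH ▸ (ideal_gc Q 𝕜).monotone_u hs

theorem isMaximalClosedSubideal_idealOfSet_diff_singleton (hH : IsClosed (H : Set C(Q, 𝕜)))
    {p : Q} (hp : p ∈ setOfIdeal H) :
    (idealOfSet 𝕜 (setOfIdeal H \ {p})).IsMaximalClosedSubideal H := by
  have hM : setOfIdeal (idealOfSet 𝕜 (setOfIdeal H \ {p})) = setOfIdeal H \ {p} :=
    setOfIdeal_ofSet_of_isOpen 𝕜 ((setOfIdeal_open H).sdiff isClosed_singleton)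
  refine ⟨idealOfSet_closed 𝕜 _, idealOfSet_le_of_subset hH Set.sdiff_subset,
    fun h => ?_, fun N hN hNH hne hMN => ?_⟩
  · rw [h] at hM
    exact (hM.subset hp).2 rfl
  have hpN : p ∉ setOfIdeal N := fun hpN => hne <| le_antisymm hNH <|
    (setOfIdeal_subset_iff_le hN).1 fun x hx => by
      by_cases hxp : x = p
      · exact hxp ▸ hpN
      · exact (ideal_gc Q 𝕜).monotone_l hMN (hM.symm.subset ⟨hx, hxp⟩)
  exact le_antisymm ((ideal_gc Q 𝕜 N _).1 fun x hx =>
    ⟨(ideal_gc Q 𝕜).monotone_l hNH hx, fun hxp => hpN (hxp ▸ hx)⟩) hMN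

theorem infinite_setOf_setOfIdeal_nonempty {I : Type*} [Infinite I] {Hi : I → Ideal C(Q, 𝕜)}
    (hinj : Function.Injective Hi) (hcl : ∀ i, IsClosed (Hi i : Set C(Q, 𝕜))) :
    {i | (setOfIdeal (Hi i)).Nonempty}.Infinite := by
  have hempty : {i | setOfIdeal (Hi i) = ∅}.Subsingleton := fun i hi j hj => hinj <| by
    rw [← idealOfSet_ofIdeal_isClosed (hcl i), ← idealOfSet_ofIdeal_isClosed (hcl j),
      show setOfIdeal (Hi i) = ∅ from hi, show setOfIdeal (Hi j) = ∅ from hj]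
  simpa only [Set.compl_ofPred, Set.nonempty_iff_ne_empty] using hempty.finite.infinite_compl

theorem exists_isDiscreteFamily_of_hasDiscreteDirectSum (hH : IsClosed (H : Set C(Q, 𝕜)))
    (h : H.HasDiscreteDirectSum.{u}) :
    ∃ U : ℕ → Set (setOfIdeal H), (∀ n, IsOpen (U n)) ∧ (∀ n, (U n).Nonempty) ∧
      IsDiscreteFamily U := by
  obtain ⟨I, Hi, hI, hinj, hcl, hle, -, hmax⟩ := h
  have hdisc (p : setOfIdeal H) :
      ∃ W ∈ 𝓝 (p : Q), {i | (setOfIdeal (Hi i) ∩ W).Nonempty}.Subsingleton := by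
    obtain ⟨f, hfH, hfM, hsub⟩ :=
      hmax _ (isMaximalClosedSubideal_idealOfSet_diff_singleton hH p.2)
    have hfp : f p ≠ 0 := by
      obtain ⟨x, hx, hfx⟩ := notMem_idealOfSet.1 hfM
      obtain rfl : x = p := by simpa [mem_setOfIdeal.2 ⟨f, hfH, hfx⟩] using hx
      exact hfx
    refine ⟨Function.support f, (isOpen_ne_fun f.continuous continuous_const).mem_nhds hfp,
      hsub.anti fun i hi => ?_⟩
    rwa [Set.mem_ofPred_eq, Ne, span_singleton_inf_eq_bot_iff,
      Set.not_disjoint_iff_nonempty_inter, Set.inter_comm]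
  let idx := (infinite_setOf_setOfIdeal_nonempty hinj hcl).natEmbedding
  refine ⟨fun n => Subtype.val ⁻¹' setOfIdeal (Hi (idx n)),
    fun n => (setOfIdeal_open _).preimage continuous_subtype_val, fun n => ?_, fun p => ?_⟩
  · obtain ⟨x, hx⟩ := (idx n).2
    exact ⟨⟨x, (ideal_gc Q 𝕜).monotone_l (hle _) hx⟩, hx⟩
  · obtain ⟨W, hW, hsub⟩ := hdisc p
    exact ⟨Subtype.val ⁻¹' W, continuous_subtype_val.continuousAt hW,
      (hsub.preimage (Subtype.val_injective.comp idx.injective)).anti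
        fun n ⟨z, hz, hzW⟩ => ⟨z, hz, hzW⟩⟩

theorem hasDiscreteDirectSum_of_isDiscreteFamily (hH : IsClosed (H : Set C(Q, 𝕜)))
    {U : ℕ → Set (setOfIdeal H)} (hU : ∀ n, IsOpen (U n)) (hne : ∀ n, (U n).Nonempty)
    (hdisc : IsDiscreteFamily U) : H.HasDiscreteDirectSum.{u} := by
  have hopen : IsOpen (setOfIdeal H) := setOfIdeal_open H
  set V : ℕ → Set Q := fun n => Subtype.val '' U n
  have hV (n : ℕ) : setOfIdeal (idealOfSet 𝕜 (V n)) = V n :=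
    setOfIdeal_ofSet_of_isOpen 𝕜 (hopen.isOpenMap_subtype_val _ (hU n))
  refine ⟨ULift ℕ, fun n => idealOfSet 𝕜 (V n.down), inferInstance, fun m n hmn => ?_,
    fun n => idealOfSet_closed 𝕜 _,
    fun n => idealOfSet_le_of_subset hH (Subtype.coe_image_subset _ _),
    idealOfSet_inf_iSup_eq_bot fun m n hmn => (Set.disjoint_image_iff Subtype.val_injective).2
      (hdisc.disjoint fun h => hmn (ULift.ext _ _ h)), fun M hM => ?_⟩
  · have hVmn : V m.down = V n.down := by
      rw [← hV m.down, ← hV n.down]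
      exact congrArg setOfIdeal hmn
    exact ULift.ext _ _ (hdisc.injective hne (Set.image_injective.2 Subtype.val_injective hVmn))
  obtain ⟨hMcl, hMH, hMne, -⟩ := hM
  obtain ⟨p, hpH, hpM⟩ : ∃ p ∈ setOfIdeal H, p ∉ setOfIdeal M := Set.not_subset.1 fun hsub =>
    hMne (le_antisymm hMH ((setOfIdeal_subset_iff_le hMcl).1 hsub))
  obtain ⟨W, hW, hsub⟩ := hdisc ⟨p, hpH⟩
  have hpW : p ∈ setOfIdeal (idealOfSet 𝕜 (Subtype.val '' W)) := by
    rw [setOfIdeal_ofSet_eq_interior, mem_interior_iff_mem_nhds]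
    exact hopen.isOpenMap_subtype_val.image_mem_nhds hW
  obtain ⟨f, hfW, hfp⟩ := mem_setOfIdeal.1 hpW
  refine ⟨f, idealOfSet_le_of_subset hH (Subtype.coe_image_subset _ _) hfW,
    fun hfM => hfp (notMem_setOfIdeal.1 hpM hfM), (hsub.preimage ULift.down_injective).anti
      fun n hn => ?_⟩
  rw [Set.mem_ofPred_eq, Ne, span_singleton_inf_eq_bot_iff, hV, Set.not_disjoint_iff] at hn
  obtain ⟨_, hfx, ⟨z, hz, rfl⟩⟩ := hn
  obtain ⟨w, hw, hwz⟩ : (z : Q) ∈ Subtype.val '' W :=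
    by_contra fun hzW => hfx (mem_idealOfSet.1 hfW hzW)
  exact ⟨z, hz, Subtype.val_injective hwz ▸ hw⟩

theorem pseudocompact_setOfIdeal_iff (hH : IsClosed (H : Set C(Q, 𝕜))) :
    Pseudocompact (setOfIdeal H) ↔ ¬ H.HasDiscreteDirectSum.{u} := by
  rw [pseudocompact_iff_not_exists_isDiscreteFamily, not_iff_not]
  exact ⟨fun ⟨_, hU, hne, hdisc⟩ => hasDiscreteDirectSum_of_isDiscreteFamily hH hU hne hdisc,
    exists_isDiscreteFamily_of_hasDiscreteDirectSum hH⟩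

end ContinuousMap

section StoneCech

variable {X 𝕜 : Type*} [TopologicalSpace X] [RCLike 𝕜]

theorem norm_betaExt_le (f : X →ᵇ 𝕜) (p : StoneCech X) : ‖betaExt f p‖ ≤ ‖f‖ := by
  have : CompactSpace (Metric.closedBall (0 : 𝕜) ‖f‖) :=
    isCompact_iff_compactSpace.mp (isCompact_closedBall 0 ‖f‖)
  have h := (stoneCechExtend (betaExt_aux f) p).2
  rwa [Metric.mem_closedBall, dist_zero_right] at h

noncomputable def stoneCechRestrict : C(StoneCech X, 𝕜) ≃+* (X →ᵇ 𝕜) where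
  toFun g := (mkOfCompact g).compContinuous ⟨stoneCechUnit, continuous_stoneCechUnit⟩
  invFun f := ⟨betaExt f, continuous_betaExt f⟩
  left_inv g := ContinuousMap.coe_injective <| stoneCech_hom_ext (continuous_betaExt _)
    g.continuous <| funext fun x => betaExt_unit _ x
  right_inv f := ext fun x => betaExt_unit f x
  map_mul' _ _ := rfl
  map_add' _ _ := rfl

theorem continuous_stoneCechRestrict :
    Continuous (stoneCechRestrict : C(StoneCech X, 𝕜) → (X →ᵇ 𝕜)) :=
  AddMonoidHomClass.continuous_of_bound stoneCechRestrict 1 fun g => by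
    simpa using (norm_le (norm_nonneg g)).2 fun x => g.norm_coe_le_norm (stoneCechUnit x)

theorem continuous_stoneCechRestrict_symm :
    Continuous (stoneCechRestrict.symm : (X →ᵇ 𝕜) → C(StoneCech X, 𝕜)) :=
  AddMonoidHomClass.continuous_of_bound stoneCechRestrict.symm 1 fun f => by
    simpa using (ContinuousMap.norm_le _ (norm_nonneg f)).2 (norm_betaExt_le f)

theorem lambdaSet_eq_setOfIdeal_comap (H : Ideal (X →ᵇ 𝕜)) :
    lambdaSet H = ContinuousMap.setOfIdeal (H.comap stoneCechRestrict) := by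
  ext p
  simp only [lambdaSet, Set.mem_iUnion, ContinuousMap.mem_setOfIdeal, Ideal.mem_comap]
  exact ⟨fun ⟨f, hf, hfp⟩ => ⟨stoneCechRestrict.symm f, by simpa using hf, hfp⟩,
    fun ⟨g, hg, hgp⟩ => ⟨_, hg, by rwa [← stoneCechRestrict.symm_apply_apply g] at hgp⟩⟩

end StoneCech

theorem spectrum_pseudocompact_iff_general {X : Type u} [TopologicalSpace X]
    {𝕜 : Type*} [RCLike 𝕜] (H : Ideal (X →ᵇ 𝕜))
    (hcl : IsClosed (H : Set (X →ᵇ 𝕜))) :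
    Pseudocompact (lambdaSet H) ↔
      ¬ ∃ (I : Type u) (Hi : I → Ideal (X →ᵇ 𝕜)),
          Infinite I ∧ Function.Injective Hi ∧
          (∀ i, IsClosed ((Hi i : Set (X →ᵇ 𝕜)))) ∧ (∀ i, Hi i ≤ H) ∧
          (∀ i₀ : I, Hi i₀ ⊓ (⨆ i ∈ {i : I | i ≠ i₀}, Hi i) = ⊥) ∧
          (∀ M : Ideal (X →ᵇ 𝕜), IsClosed (M : Set (X →ᵇ 𝕜)) → M ≤ H → M ≠ H →
            (∀ N : Ideal (X →ᵇ 𝕜),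
              IsClosed (N : Set (X →ᵇ 𝕜)) → N ≤ H → N ≠ H → M ≤ N → N = M) →
            ∃ f ∈ H, f ∉ M ∧
              {i : I | Ideal.span {f} ⊓ Hi i ≠ ⊥}.Subsingleton) := by
  rw [lambdaSet_eq_setOfIdeal_comap, ContinuousMap.pseudocompact_setOfIdeal_iff
      (hcl.preimage continuous_stoneCechRestrict),
    Ideal.hasDiscreteDirectSum_comap_iff _ continuous_stoneCechRestrict
      continuous_stoneCechRestrict_symm]
  simp only [Ideal.HasDiscreteDirectSum, Ideal.IsMaximalClosedSubideal, and_imp]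
  rfl

/-- For a Tychonoff space `X` and a non-vanishing closed ideal `H` of `C_B(X)`: `sp(H)` is
pseudocompact iff `H` has no subideal which is an (internal) direct sum `⨁_{i∈I} H_i` of an
infinite faithfully indexed collection of closed subideals of `H` such that for every maximal
closed subideal `M` of `H` there is `f ∈ H \ M` with `⟨f⟩ ∩ H_i = 0` for all but at most one
`i ∈ I`. -/
theorem spectrum_pseudocompact_iff {X : Type u} [TopologicalSpace X] [T35Space X]
    {𝕜 : Type*} [RCLike 𝕜] (H : Ideal (X →ᵇ 𝕜))
    (hcl : IsClosed (H : Set (X →ᵇ 𝕜))) (hnv : ∀ x : X, ∃ h ∈ H, h x ≠ 0) :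
    Pseudocompact (lambdaSet H) ↔
      ¬ ∃ (I : Type u) (Hi : I → Ideal (X →ᵇ 𝕜)),
          Infinite I ∧ Function.Injective Hi ∧
          (∀ i, IsClosed ((Hi i : Set (X →ᵇ 𝕜)))) ∧ (∀ i, Hi i ≤ H) ∧
          (∀ i₀ : I, Hi i₀ ⊓ (⨆ i ∈ {i : I | i ≠ i₀}, Hi i) = ⊥) ∧
          (∀ M : Ideal (X →ᵇ 𝕜), IsClosed (M : Set (X →ᵇ 𝕜)) → M ≤ H → M ≠ H →
            (∀ N : Ideal (X →ᵇ 𝕜),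
              IsClosed (N : Set (X →ᵇ 𝕜)) → N ≤ H → N ≠ H → M ≤ N → N = M) →
            ∃ f ∈ H, f ∉ M ∧
              {i : I | Ideal.span {f} ⊓ Hi i ≠ ⊥}.Subsingleton) :=
  spectrum_pseudocompact_iff_general H hcl
end

section
/- Let X be a completely regular Hausdorff (Tychonoff) space and let H be a non-vanishing closed ideal of C_B(X). Then the open subspaces of sp(H) are exactly the sets of the form λ_G X where G is a closed subideal of H. Specifically, for an open subspace U of sp(H) one has U = λ_G X where G = {g ∈ H : g_β vanishes on βX \ U}. -/
open BoundedContinuousFunction Set Filter Topology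

section Aux

variable {X : Type*} [TopologicalSpace X] {𝕜 : Type*} [RCLike 𝕜]

theorem betaExt_eq (f : X →ᵇ 𝕜) {φ : StoneCech X → 𝕜} (hφ : Continuous φ)
    (h : ∀ x, φ (stoneCechUnit x) = f x) : betaExt f = φ :=
  denseRange_stoneCechUnit.equalizer (continuous_betaExt f) hφ
    (funext fun x => (betaExt_unit f x).trans (h x).symm)

theorem betaExt_zero : betaExt (0 : X →ᵇ 𝕜) = fun _ => 0 :=
  betaExt_eq 0 continuous_const fun _ => rfl

theorem betaExt_add (f g : X →ᵇ 𝕜) :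
    betaExt (f + g) = fun p => betaExt f p + betaExt g p :=
  betaExt_eq _ ((continuous_betaExt f).add (continuous_betaExt g)) fun x => by
    simp [betaExt_unit]

theorem betaExt_mul (f g : X →ᵇ 𝕜) :
    betaExt (f * g) = fun p => betaExt f p * betaExt g p :=
  betaExt_eq _ ((continuous_betaExt f).mul (continuous_betaExt g)) fun x => by
    simp [betaExt_unit]

theorem dist_betaExt_le (f g : X →ᵇ 𝕜) (p : StoneCech X) :
    dist (betaExt f p) (betaExt g p) ≤ dist f g := by
  have hcl : IsClosed {q : StoneCech X | dist (betaExt f q) (betaExt g q) ≤ dist f g} :=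
    isClosed_le (((continuous_betaExt f).dist (continuous_betaExt g))) continuous_const
  have hsub : Set.range (stoneCechUnit : X → StoneCech X) ⊆
      {q : StoneCech X | dist (betaExt f q) (betaExt g q) ≤ dist f g} := by
    rintro _ ⟨x, rfl⟩
    simp only [Set.mem_setOf_eq, betaExt_unit]
    exact BoundedContinuousFunction.dist_coe_le_dist x
  have := closure_minimal hsub hcl
  rw [denseRange_stoneCechUnit.closure_range] at this
  exact this (Set.mem_univ p)

theorem continuous_betaExt_eval (p : StoneCech X) :
    Continuous (fun g : X →ᵇ 𝕜 => betaExt g p) :=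
  (LipschitzWith.of_dist_le_mul (K := 1) fun f g => by
    rw [NNReal.coe_one, one_mul]; exact dist_betaExt_le f g p).continuous

theorem isOpen_lambdaSet (G : Ideal (X →ᵇ 𝕜)) : IsOpen (lambdaSet G) :=
  isOpen_biUnion fun g _ => isOpen_compl_iff.mpr
    (isClosed_eq (continuous_betaExt g) continuous_const)

/-- The ideal `{g ∈ H : g_β = 0 on βX \ U}`. -/
def vanishIdeal (H : Ideal (X →ᵇ 𝕜)) (U : Set (StoneCech X)) : Ideal (X →ᵇ 𝕜) where
  carrier := {g | g ∈ H ∧ ∀ p ∉ U, betaExt g p = 0}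
  zero_mem' := ⟨H.zero_mem, fun p _ => congrFun betaExt_zero p⟩
  add_mem' := fun {a b} ha hb => ⟨H.add_mem ha.1 hb.1, fun p hp => by
    simp [congrFun (betaExt_add a b) p, ha.2 p hp, hb.2 p hp]⟩
  smul_mem' := fun c g hg => ⟨H.smul_mem c hg.1, fun p hp => by
    rw [smul_eq_mul]
    simp [congrFun (betaExt_mul c g) p, hg.2 p hp]⟩

theorem mem_vanishIdeal {H : Ideal (X →ᵇ 𝕜)} {U : Set (StoneCech X)} {g : X →ᵇ 𝕜} :
    g ∈ vanishIdeal H U ↔ g ∈ H ∧ ∀ p ∉ U, betaExt g p = 0 := Iff.rfl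

theorem isClosed_vanishIdeal (H : Ideal (X →ᵇ 𝕜)) (hcl : IsClosed (H : Set (X →ᵇ 𝕜)))
    (U : Set (StoneCech X)) : IsClosed ((vanishIdeal H U : Ideal (X →ᵇ 𝕜)) : Set (X →ᵇ 𝕜)) := by
  have : ((vanishIdeal H U : Ideal (X →ᵇ 𝕜)) : Set (X →ᵇ 𝕜)) =
      (H : Set (X →ᵇ 𝕜)) ∩ ⋂ p ∈ Uᶜ, {g : X →ᵇ 𝕜 | betaExt g p = 0} := by
    ext g
    simp [mem_vanishIdeal, Set.mem_iInter]
  rw [this]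
  exact hcl.inter (isClosed_biInter fun p _ =>
    isClosed_eq (continuous_betaExt_eval p) continuous_const)

theorem mem_lambdaSet {G : Ideal (X →ᵇ 𝕜)} {p : StoneCech X} :
    p ∈ lambdaSet G ↔ ∃ g ∈ G, betaExt g p ≠ 0 := by
  simp [lambdaSet]

end Aux

/-- For a Tychonoff space `X` and a non-vanishing closed ideal `H` of `C_B(X)`: the open
subspaces of `sp(H) = λ_H X` are exactly the sets `λ_G X` for closed subideals `G` of `H`;
specifically, an open `U ⊆ λ_H X` equals `λ_G X` for `G = {g ∈ H : g_β = 0 on βX \ U}`. -/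
theorem open_subspaces_of_spectrum {X : Type*} [TopologicalSpace X] [T35Space X]
    {𝕜 : Type*} [RCLike 𝕜] (H : Ideal (X →ᵇ 𝕜))
    (hcl : IsClosed (H : Set (X →ᵇ 𝕜))) (hnv : ∀ x : X, ∃ h ∈ H, h x ≠ 0) :
    (∀ U : Set (StoneCech X),
      (IsOpen U ∧ U ⊆ lambdaSet H) ↔
        ∃ G : Ideal (X →ᵇ 𝕜), IsClosed (G : Set (X →ᵇ 𝕜)) ∧ G ≤ H ∧ U = lambdaSet G) ∧
    (∀ U : Set (StoneCech X), IsOpen U → U ⊆ lambdaSet H →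
      ∀ G : Ideal (X →ᵇ 𝕜),
        (∀ g : X →ᵇ 𝕜, g ∈ G ↔ g ∈ H ∧ ∀ p ∉ U, betaExt g p = 0) →
        U = lambdaSet G) := by
  have key : ∀ U : Set (StoneCech X), IsOpen U → U ⊆ lambdaSet H →
      ∀ G : Ideal (X →ᵇ 𝕜),
        (∀ g : X →ᵇ 𝕜, g ∈ G ↔ g ∈ H ∧ ∀ p ∉ U, betaExt g p = 0) →
        U = lambdaSet G := by
    intro U hU hsub G hG
    apply subset_antisymm
    · intro p hp
      obtain ⟨h, hH, hh⟩ := mem_lambdaSet.mp (hsub hp)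
      -- Urysohn function on βX : 1 at p, 0 off U
      obtain ⟨f, hf0, hf1, hf01⟩ := exists_continuous_zero_one_of_isClosed
        (isClosed_compl_iff.mpr hU) (isClosed_singleton (x := p))
        (Set.disjoint_left.mpr fun q hq hq' => hq (hq' ▸ hp))
      -- the bounded continuous function x ↦ f (unit x)
      set φ : X →ᵇ 𝕜 :=
        { toFun := fun x => ((f (stoneCechUnit x) : ℝ) : 𝕜)
          continuous_toFun := RCLike.continuous_ofReal.comp
            (f.continuous.comp continuous_stoneCechUnit)
          map_bounded' := ⟨2, fun x y => by
            refine (dist_triangle _ 0 _).trans ?_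
            simp only [dist_zero_right, dist_zero_left, RCLike.norm_ofReal]
            have hx := hf01 (stoneCechUnit x)
            have hy := hf01 (stoneCechUnit y)
            rw [abs_of_nonneg hx.1, abs_of_nonneg hy.1]
            linarith [hx.2, hy.2]⟩ } with hφ
      have hmul : betaExt (φ * h) = fun q => ((f q : ℝ) : 𝕜) * betaExt h q :=
        betaExt_eq _ ((RCLike.continuous_ofReal.comp f.continuous).mul (continuous_betaExt h))
          fun x => by rw [betaExt_unit]; rfl
      have hg : φ * h ∈ G := by
        rw [hG]
        refine ⟨Ideal.mul_mem_left H φ hH, fun q hq => ?_⟩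
        rw [congrFun hmul q, hf0 hq]
        simp
      refine mem_lambdaSet.mpr ⟨φ * h, hg, ?_⟩
      rw [congrFun hmul p, hf1 rfl]
      simpa using hh
    · intro p hp
      obtain ⟨g, hgG, hgp⟩ := mem_lambdaSet.mp hp
      by_contra hpU
      exact hgp (((hG g).mp hgG).2 p hpU)
  constructor
  · intro U
    constructor
    · rintro ⟨hU, hsub⟩
      exact ⟨vanishIdeal H U, isClosed_vanishIdeal H hcl U, fun g hg => hg.1,
        key U hU hsub _ fun g => mem_vanishIdeal⟩
    · rintro ⟨G, -, hGH, rfl⟩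
      refine ⟨isOpen_lambdaSet G, fun p hp => ?_⟩
      obtain ⟨g, hgG, hgp⟩ := mem_lambdaSet.mp hp
      exact mem_lambdaSet.mpr ⟨g, hGH hgG, hgp⟩
  · exact key
end
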